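/- arXiv:1507.07506 — 7 statements merged into one kernel-verified Lean document; each statement's English description precedes it below -/
import Mathlib

section
/- Let G be a SIN group and let Δ be a bounded continuous right-invariant pseudometric on G (i.e. there is C ∈ ℝ with Δ(x,y) ≤ C for all x,y ∈ G). Then there exists a continuous bi-invariant pseudometric Θ on G such that Θ(x,y) ≥ Δ(x,y) for all x,y ∈ G. -/
def IsPseudometric {X : Type*} (d : X → X → ℝ) : Prop :=
  (∀ x, d x x = 0) ∧ (∀ x y, d x y = d y x) ∧ (∀ x y, 0 ≤ d x y) ∧
    (∀ x y z, d x z ≤ d x y + d y z)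

def BLipb {X : Type*} (d : X → X → ℝ) : Set (X → ℝ) :=
  {f | (∀ x, f x ∈ Set.Icc (-1 : ℝ) 1) ∧ ∀ x y, |f x - f y| ≤ d x y}

def RightInvariant {G : Type*} [Group G] (d : G → G → ℝ) : Prop :=
  ∀ x y z : G, d (x * z) (y * z) = d x y

def LeftInvariant {G : Type*} [Group G] (d : G → G → ℝ) : Prop :=
  ∀ x y z : G, d (z * x) (z * y) = d x y

def ContPseudometric {G : Type*} [TopologicalSpace G] (d : G → G → ℝ) : Prop :=
  Continuous fun p : G × G => d p.1 p.2

def IsSIN (G : Type*) [Group G] [TopologicalSpace G] : Prop :=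
  ∀ U ∈ nhds (1 : G), ∃ (d : G → G → ℝ) (ε : ℝ), IsPseudometric d ∧
    ContPseudometric d ∧ LeftInvariant d ∧ RightInvariant d ∧ 0 < ε ∧
    {x : G | d x 1 < ε} ⊆ U

/-!
Take `Θ x y = ⨆ z, Δ (z * x) (z * y)`, which is finite because `Δ` is bounded. Taking the
supremum over left translates makes `Θ` left-invariant, and it stays right-invariant because
left and right multiplications commute. Continuity is where the SIN property enters: a
bi-invariant pseudometric `d` controls `Δ` near the identity, and since `d` is left-invariant
this control is uniform over all left translates, so `Θ x x'` is small once `x'` is close to `x`.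
-/

open Filter Topology

theorem IsPseudometric.abs_sub_le {X : Type*} {d : X → X → ℝ} (hd : IsPseudometric d)
    (x y x' y' : X) : |d x y - d x' y'| ≤ d x x' + d y y' := by
  obtain ⟨-, hsymm, -, htri⟩ := hd
  rw [abs_sub_le_iff]
  constructor
  · linarith [htri x x' y, htri x' y' y, hsymm y y']
  · linarith [htri x' x y', htri x y y', hsymm x x']

theorem IsPseudometric.contPseudometric {X : Type*} [TopologicalSpace X] {d : X → X → ℝ}
    (hd : IsPseudometric d) (hd₀ : ∀ x, Tendsto (d x) (𝓝 x) (𝓝 0)) :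
    ContPseudometric d := by
  rw [ContPseudometric, continuous_iff_continuousAt]
  rintro ⟨x, y⟩
  have htendsto : ∀ {z : X} {f : X × X → X}, Tendsto f (𝓝 (x, y)) (𝓝 z) →
      Tendsto (fun p => d (f p) z) (𝓝 (x, y)) (𝓝 0) := fun {z f} hf =>
    ((hd₀ z).comp hf).congr fun p => hd.2.1 z (f p)
  have hsum := (htendsto continuous_fst.continuousAt).add (htendsto continuous_snd.continuousAt)
  rw [add_zero] at hsum
  exact tendsto_iff_dist_tendsto_zero.2
    (squeeze_zero (fun _ => dist_nonneg) (fun p => hd.abs_sub_le p.1 p.2 x y) hsum)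

theorem RightInvariant.apply_eq_mul_inv {G : Type*} [Group G] {d : G → G → ℝ}
    (hd : RightInvariant d) (u v : G) : d u v = d (u * v⁻¹) 1 := by
  simpa using hd (u * v⁻¹) 1 v

theorem IsSIN.eventually_forall_mul_lt {G : Type*} [Group G] [TopologicalSpace G]
    (hSIN : IsSIN G) {Δ : G → G → ℝ} (hΔ₀ : ∀ x, Δ x x = 0) (hcont : ContPseudometric Δ)
    (hri : RightInvariant Δ) (x : G) {ε : ℝ} (hε : 0 < ε) :
    ∀ᶠ x' in 𝓝 x, ∀ z, Δ (z * x) (z * x') < ε := by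
  have hU : {u : G | Δ u 1 < ε} ∈ 𝓝 (1 : G) := by
    refine (isOpen_lt (hcont.comp (continuous_id.prodMk continuous_const)) continuous_const
      ).mem_nhds ?_
    simpa [hΔ₀] using hε
  obtain ⟨d, δ, hd, hdcont, hdl, hdr, hδ, hdU⟩ := hSIN _ hU
  have hnear : {x' | d x x' < δ} ∈ 𝓝 x :=
    (isOpen_lt (hdcont.comp (continuous_const.prodMk continuous_id)) continuous_const
      ).mem_nhds (by simpa [hd.1] using hδ)
  filter_upwards [hnear] with x' hx' z
  have hmem : d (z * x * (z * x')⁻¹) 1 < δ := by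
    rwa [← hdr.apply_eq_mul_inv, hdl]
  rw [hri.apply_eq_mul_inv]
  exact hdU hmem

section SupLeftTranslate

variable {G : Type*} [Group G] {Δ : G → G → ℝ}

noncomputable def supLeftTranslate (Δ : G → G → ℝ) (x y : G) : ℝ :=
  ⨆ z : G, Δ (z * x) (z * y)

theorem supLeftTranslate_le {x y : G} {b : ℝ} (h : ∀ z, Δ (z * x) (z * y) ≤ b) :
    supLeftTranslate Δ x y ≤ b :=
  ciSup_le h

variable {C : ℝ}

theorem le_supLeftTranslate (hbd : ∀ x y : G, Δ x y ≤ C) (x y z : G) :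
    Δ (z * x) (z * y) ≤ supLeftTranslate Δ x y :=
  le_ciSup (f := fun w => Δ (w * x) (w * y)) ⟨C, by rintro _ ⟨w, rfl⟩; exact hbd _ _⟩ z

theorem self_le_supLeftTranslate (hbd : ∀ x y : G, Δ x y ≤ C) (x y : G) :
    Δ x y ≤ supLeftTranslate Δ x y := by
  simpa using le_supLeftTranslate hbd x y 1

theorem IsPseudometric.supLeftTranslate (hΔ : IsPseudometric Δ)
    (hbd : ∀ x y : G, Δ x y ≤ C) :
    IsPseudometric (supLeftTranslate Δ) := by
  obtain ⟨hrefl, hsymm, hnonneg, htri⟩ := hΔ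
  refine ⟨fun x => ?_, fun x y => ?_, fun x y => ?_, fun x y z => ?_⟩
  · exact le_antisymm (supLeftTranslate_le fun z => (hrefl _).le)
      ((hrefl x).symm.le.trans (self_le_supLeftTranslate hbd x x))
  · exact iSup_congr fun z => hsymm _ _
  · exact (hnonneg x y).trans (self_le_supLeftTranslate hbd x y)
  · refine supLeftTranslate_le fun w => (htri _ (w * y) _).trans ?_
    exact add_le_add (le_supLeftTranslate hbd x y w) (le_supLeftTranslate hbd y z w)

theorem leftInvariant_supLeftTranslate (hbd : ∀ x y : G, Δ x y ≤ C) :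
    LeftInvariant (supLeftTranslate Δ) := by
  intro x y z
  refine le_antisymm (supLeftTranslate_le fun w => ?_) (supLeftTranslate_le fun w => ?_)
  · simpa only [mul_assoc] using le_supLeftTranslate hbd x y (w * z)
  · simpa only [mul_assoc, inv_mul_cancel_left] using
      le_supLeftTranslate hbd (z * x) (z * y) (w * z⁻¹)

theorem RightInvariant.supLeftTranslate (hri : RightInvariant Δ) :
    RightInvariant (supLeftTranslate Δ) := fun x y z =>
  iSup_congr fun w => by rw [← mul_assoc, ← mul_assoc, hri]

theorem IsSIN.contPseudometric_supLeftTranslate [TopologicalSpace G] (hSIN : IsSIN G)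
    (hbd : ∀ x y : G, Δ x y ≤ C) (hΔ : IsPseudometric Δ) (hcont : ContPseudometric Δ)
    (hri : RightInvariant Δ) :
    ContPseudometric (supLeftTranslate Δ) := by
  have hΘ := hΔ.supLeftTranslate hbd
  refine hΘ.contPseudometric fun x => tendsto_order.2 ⟨fun a ha => ?_, fun a ha => ?_⟩
  · exact Eventually.of_forall fun x' => ha.trans_le (hΘ.2.2.1 x x')
  · filter_upwards [hSIN.eventually_forall_mul_lt hΔ.1 hcont hri x (half_pos ha)] with x' hx'
    exact (supLeftTranslate_le fun z => (hx' z).le).trans_lt (half_lt_self ha)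

end SupLeftTranslate

theorem exists_biinvariant_above_general (G : Type*) [Group G] [TopologicalSpace G]
    (hSIN : IsSIN G)
    (Δ : G → G → ℝ) (hpm : IsPseudometric Δ) (hcont : ContPseudometric Δ)
    (hri : RightInvariant Δ) (C : ℝ) (hbd : ∀ x y : G, Δ x y ≤ C) :
    ∃ Θ : G → G → ℝ, IsPseudometric Θ ∧ ContPseudometric Θ ∧ LeftInvariant Θ ∧
      RightInvariant Θ ∧ ∀ x y : G, Δ x y ≤ Θ x y :=
  ⟨supLeftTranslate Δ, hpm.supLeftTranslate hbd,
    hSIN.contPseudometric_supLeftTranslate hbd hpm hcont hri,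
    leftInvariant_supLeftTranslate hbd, hri.supLeftTranslate, self_le_supLeftTranslate hbd⟩

/-- In a SIN group, every bounded continuous right-invariant pseudometric
is dominated by a continuous bi-invariant pseudometric. -/
theorem exists_biinvariant_above (G : Type*) [Group G] [TopologicalSpace G]
    [IsTopologicalGroup G] [T2Space G] (hSIN : IsSIN G)
    (Δ : G → G → ℝ) (hpm : IsPseudometric Δ) (hcont : ContPseudometric Δ)
    (hri : RightInvariant Δ) (C : ℝ) (hbd : ∀ x y : G, Δ x y ≤ C) :
    ∃ Θ : G → G → ℝ, IsPseudometric Θ ∧ ContPseudometric Θ ∧ LeftInvariant Θ ∧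
      RightInvariant Θ ∧ ∀ x y : G, Δ x y ≤ Θ x y :=
  exists_biinvariant_above_general G hSIN Δ hpm hcont hri C hbd
end

section
/- Let G be a SIN group and let Δ be a continuous right-invariant pseudometric on G. Then there exists a continuous bi-invariant pseudometric Θ on G such that BLip_b(Δ) ⊆ BLip_b(Θ), i.e. every function f : G → ℝ with values in [-1,1] and |f(x) − f(y)| ≤ Δ(x,y) for all x,y also satisfies |f(x) − f(y)| ≤ Θ(x,y) for all x,y. -/
/-!
Apply the SIN property to the neighbourhoods `{g | Δ g 1 < 2⁻ⁿ}` and rescale: this gives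
continuous bi-invariant pseudometrics `dₙ` with `dₙ x y ≥ 1` whenever `Δ x y ≥ 2⁻ⁿ`. Then
`Θ = ∑ₙ 2 ⬝ 2⁻ⁿ ⬝ min dₙ 1` is a continuous bi-invariant pseudometric, and if `2⁻ⁿ⁻¹ < Δ x y ≤ 2⁻ⁿ`
its `(n+1)`-st term alone is `2⁻ⁿ ≥ Δ x y`. Since a function in `BLip_b(Δ)` has oscillation at most
`min Δ 2`, this suffices.
-/

open Topology

theorem min_add_le_min_add_min {α : Type*} [AddCommMonoid α] [LinearOrder α]
    [IsOrderedAddMonoid α] {a b c : α} (ha : 0 ≤ a) (hb : 0 ≤ b) (hc : 0 ≤ c) :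
    min (a + b) c ≤ min a c + min b c := by
  rcases le_total a c with hac | hca
  · rcases le_total b c with hbc | hcb
    · rw [min_eq_left hac, min_eq_left hbc]
      exact min_le_left _ _
    · rw [min_eq_right hcb]
      exact (min_le_right _ _).trans (le_add_of_nonneg_left (le_min ha hc))
  · rw [min_eq_right hca]
    exact (min_le_right _ _).trans (le_add_of_nonneg_right (le_min hb hc))

theorem min_two_le_of_forall_inv_two_pow_le {t s : ℝ} (hs : 0 ≤ s)
    (h : ∀ n : ℕ, (2⁻¹ : ℝ) ^ n ≤ t → 2 * (2⁻¹ : ℝ) ^ n ≤ s) : min t 2 ≤ s := by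
  rcases le_or_gt t 0 with ht₀ | ht₀
  · exact (min_le_left t 2).trans (ht₀.trans hs)
  rcases le_or_gt 1 t with ht₁ | ht₁
  · exact (min_le_right t 2).trans (by simpa using h 0 (by simpa using ht₁))
  obtain ⟨n, hlt, hle⟩ := exists_nat_pow_near_of_lt_one ht₀ ht₁.le (by norm_num : (0 : ℝ) < 2⁻¹)
    (by norm_num)
  calc min t 2 ≤ t := min_le_left t 2
    _ ≤ (2⁻¹) ^ n := hle
    _ = 2 * (2⁻¹) ^ (n + 1) := by ring
    _ ≤ s := h (n + 1) hlt.le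

theorem BLipb_subset_of_forall_min_two_le {X : Type*} {Δ Θ : X → X → ℝ}
    (h : ∀ x y, min (Δ x y) 2 ≤ Θ x y) : BLipb Δ ⊆ BLipb Θ := by
  rintro f ⟨hf, hfΔ⟩
  refine ⟨hf, fun x y => (le_min (hfΔ x y) ?_).trans (h x y)⟩
  obtain ⟨hx₁, hx₂⟩ := hf x
  obtain ⟨hy₁, hy₂⟩ := hf y
  rw [abs_le]
  constructor <;> linarith

section Pseudometric

variable {X : Type*}

theorem IsPseudometric.comp {d : X → X → ℝ} (hd : IsPseudometric d) {φ : ℝ → ℝ}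
    (hφ₀ : φ 0 = 0) (hφ : Monotone φ) (hφ_add : ∀ a b, 0 ≤ a → 0 ≤ b → φ (a + b) ≤ φ a + φ b) :
    IsPseudometric fun x y => φ (d x y) := by
  obtain ⟨hrefl, hsymm, hnonneg, htri⟩ := hd
  refine ⟨fun x => by simp only [hrefl, hφ₀], fun x y => congrArg φ (hsymm x y), fun x y => ?_,
    fun x y z => ?_⟩
  · exact hφ₀ ▸ hφ (hnonneg x y)
  · exact (hφ (htri x y z)).trans (hφ_add _ _ (hnonneg x y) (hnonneg y z))

theorem IsPseudometric.const_mul_min_one {d : X → X → ℝ} (hd : IsPseudometric d) {c : ℝ}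
    (hc : 0 ≤ c) : IsPseudometric fun x y => c * min (d x y) 1 := by
  refine hd.comp (by simp) ((monotone_id.min monotone_const).const_mul hc) fun a b ha hb => ?_
  rw [← mul_add]
  exact mul_le_mul_of_nonneg_left (min_add_le_min_add_min ha hb zero_le_one) hc

theorem ContPseudometric.comp [TopologicalSpace X] {d : X → X → ℝ} (hd : ContPseudometric d)
    {φ : ℝ → ℝ} (hφ : Continuous φ) : ContPseudometric fun x y => φ (d x y) :=
  hφ.comp hd

variable {ι : Type*} {d : ι → X → X → ℝ} {M : ι → ℝ}

theorem IsPseudometric.summable (hd : ∀ i, IsPseudometric (d i)) (hM : Summable M)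
    (hdM : ∀ i x y, d i x y ≤ M i) (x y : X) : Summable fun i => d i x y :=
  hM.of_nonneg_of_le (fun i => (hd i).2.2.1 x y) fun i => hdM i x y

theorem IsPseudometric.tsum (hd : ∀ i, IsPseudometric (d i)) (hM : Summable M)
    (hdM : ∀ i x y, d i x y ≤ M i) : IsPseudometric fun x y => ∑' i, d i x y := by
  have hs := IsPseudometric.summable hd hM hdM
  refine ⟨fun x => by simp [(hd _).1 x], fun x y => tsum_congr fun i => (hd i).2.1 x y,
    fun x y => tsum_nonneg fun i => (hd i).2.2.1 x y, fun x y z => ?_⟩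
  rw [← (hs x y).tsum_add (hs y z)]
  exact (hs x z).tsum_le_tsum (fun i => (hd i).2.2.2 x y z) ((hs x y).add (hs y z))

theorem ContPseudometric.tsum [TopologicalSpace X] (hd : ∀ i, IsPseudometric (d i))
    (hc : ∀ i, ContPseudometric (d i)) (hM : Summable M) (hdM : ∀ i x y, d i x y ≤ M i) :
    ContPseudometric fun x y => ∑' i, d i x y :=
  continuous_tsum hc hM fun i p => by
    rw [Real.norm_of_nonneg ((hd i).2.2.1 _ _)]
    exact hdM i _ _

end Pseudometric

section Invariance

variable {G : Type*} [Group G]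

theorem LeftInvariant.comp {d : G → G → ℝ} (hd : LeftInvariant d) (φ : ℝ → ℝ) :
    LeftInvariant fun x y => φ (d x y) :=
  fun x y z => congrArg φ (hd x y z)

theorem RightInvariant.comp {d : G → G → ℝ} (hd : RightInvariant d) (φ : ℝ → ℝ) :
    RightInvariant fun x y => φ (d x y) :=
  fun x y z => congrArg φ (hd x y z)

theorem LeftInvariant.tsum {ι : Type*} {d : ι → G → G → ℝ} (hd : ∀ i, LeftInvariant (d i)) :
    LeftInvariant fun x y => ∑' i, d i x y :=
  fun x y z => tsum_congr fun i => hd i x y z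

theorem RightInvariant.tsum {ι : Type*} {d : ι → G → G → ℝ} (hd : ∀ i, RightInvariant (d i)) :
    RightInvariant fun x y => ∑' i, d i x y :=
  fun x y z => tsum_congr fun i => hd i x y z

theorem RightInvariant.eq_mul_inv {d : G → G → ℝ} (hd : RightInvariant d) (x y : G) :
    d x y = d (x * y⁻¹) 1 := by
  rw [← mul_inv_cancel y, hd]

theorem IsSIN.exists_biinvariant_one_le [TopologicalSpace G] (hSIN : IsSIN G)
    {Δ : G → G → ℝ} (hΔ₀ : Δ 1 1 = 0) (hΔc : ContPseudometric Δ) (hΔr : RightInvariant Δ)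
    {r : ℝ} (hr : 0 < r) :
    ∃ d : G → G → ℝ, IsPseudometric d ∧ ContPseudometric d ∧ LeftInvariant d ∧
      RightInvariant d ∧ ∀ x y, r ≤ Δ x y → 1 ≤ d x y := by
  have hΔ₁ : Continuous fun g => Δ g 1 :=
    Continuous.comp hΔc (continuous_id.prodMk continuous_const)
  have hU : {g : G | Δ g 1 < r} ∈ 𝓝 1 :=
    (isOpen_lt hΔ₁ continuous_const).mem_nhds (by simpa [hΔ₀] using hr)
  obtain ⟨d, ε, hd, hdc, hdl, hdr, hε, hsub⟩ := hSIN _ hU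
  refine ⟨fun x y => ε⁻¹ * d x y,
    hd.comp (mul_zero _) (monotone_id.const_mul (inv_nonneg.2 hε.le))
      fun a b _ _ => (mul_add ..).le,
    hdc.comp (continuous_const_mul _), hdl.comp _, hdr.comp _, fun x y hxy => ?_⟩
  rw [le_inv_mul_iff₀ hε, mul_one]
  by_contra! hlt
  rw [hdr.eq_mul_inv] at hlt
  have hΔlt : Δ (x * y⁻¹) 1 < r := hsub hlt
  rw [← hΔr.eq_mul_inv] at hΔlt
  linarith

end Invariance

theorem exists_biinvariant_blipb_subset_general (G : Type*) [Group G] [TopologicalSpace G]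
    (hSIN : IsSIN G)
    (Δ : G → G → ℝ) (hpm : IsPseudometric Δ) (hcont : ContPseudometric Δ)
    (hri : RightInvariant Δ) :
    ∃ Θ : G → G → ℝ, IsPseudometric Θ ∧ ContPseudometric Θ ∧ LeftInvariant Θ ∧
      RightInvariant Θ ∧ BLipb Δ ⊆ BLipb Θ := by
  choose d hd hdc hdl hdr hd_one using fun n : ℕ =>
    hSIN.exists_biinvariant_one_le (hpm.1 1) hcont hri (r := (2⁻¹ : ℝ) ^ n) (by positivity)
  set w : ℕ → ℝ := fun n => 2 * (2⁻¹ : ℝ) ^ n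
  set T : ℕ → G → G → ℝ := fun n x y => w n * min (d n x y) 1
  have hT : ∀ n, IsPseudometric (T n) := fun n => (hd n).const_mul_min_one (by positivity)
  have hTw : ∀ n x y, T n x y ≤ w n := fun n x y =>
    mul_le_of_le_one_right (by positivity) (min_le_right _ _)
  have hw : Summable w := (summable_geometric_of_lt_one (by norm_num) (by norm_num)).mul_left 2
  refine ⟨fun x y => ∑' n, T n x y, IsPseudometric.tsum hT hw hTw,
    ContPseudometric.tsum hT (fun n => (hdc n).comp (φ := (w n * min · 1)) (by fun_prop)) hw hTw,
    LeftInvariant.tsum fun n => (hdl n).comp (w n * min · 1),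
    RightInvariant.tsum fun n => (hdr n).comp (w n * min · 1),
    BLipb_subset_of_forall_min_two_le fun x y => ?_⟩
  refine min_two_le_of_forall_inv_two_pow_le (tsum_nonneg fun n => (hT n).2.2.1 x y)
    fun n hn => ?_
  calc 2 * (2⁻¹ : ℝ) ^ n = T n x y := by simp [T, w, min_eq_right (hd_one n x y hn)]
    _ ≤ ∑' k, T k x y :=
      (IsPseudometric.summable hT hw hTw x y).le_tsum n fun k _ => (hT k).2.2.1 x y

/-- In a SIN group, for every continuous right-invariant pseudometric Δ
there is a continuous bi-invariant pseudometric Θ with BLip_b(Δ) ⊆ BLip_b(Θ). -/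
theorem exists_biinvariant_blipb_subset (G : Type*) [Group G] [TopologicalSpace G]
    [IsTopologicalGroup G] [T2Space G] (hSIN : IsSIN G)
    (Δ : G → G → ℝ) (hpm : IsPseudometric Δ) (hcont : ContPseudometric Δ)
    (hri : RightInvariant Δ) :
    ∃ Θ : G → G → ℝ, IsPseudometric Θ ∧ ContPseudometric Θ ∧ LeftInvariant Θ ∧
      RightInvariant Θ ∧ BLipb Δ ⊆ BLipb Θ :=
  exists_biinvariant_blipb_subset_general G hSIN Δ hpm hcont hri
end

section
/- Let Δ be a pseudometric on a set X and let f ∈ BLip_b(Δ) with ‖f‖ := sup_{x ∈ X} |f(x)| > 0. Then the function g := f / √‖f‖ belongs to BLip_b(2√Δ); that is, |g(x)| ≤ 1 for all x ∈ X and |g(x) − g(y)| ≤ 2·√(Δ(x,y)) for all x,y ∈ X. -/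
theorem Real.le_two_mul_sqrt_mul_sqrt {a δ M : ℝ} (ha : 0 ≤ a) (hδ : a ≤ δ) (hM : a ≤ 2 * M) :
    a ≤ 2 * √δ * √M := by
  have hδ₀ := Real.sqrt_nonneg δ
  have hM₀ := Real.sqrt_nonneg M
  rcases le_total δ M with h | h
  · have := Real.sqrt_le_sqrt h
    calc a ≤ √δ * √δ := by rwa [Real.mul_self_sqrt (ha.trans hδ)]
      _ ≤ 2 * √δ * √M := by nlinarith
  · have := Real.sqrt_le_sqrt h
    calc a ≤ 2 * (√M * √M) := by rwa [Real.mul_self_sqrt (by linarith)]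
      _ ≤ 2 * √δ * √M := by nlinarith

namespace BLipb

variable {X : Type*} {d : X → X → ℝ} {f : X → ℝ}

theorem abs_le_one (hf : f ∈ BLipb d) (x : X) : |f x| ≤ 1 :=
  abs_le.2 (hf.1 x)

theorem abs_le_iSup_abs (hf : f ∈ BLipb d) (x : X) : |f x| ≤ ⨆ y, |f y| :=
  le_ciSup ⟨1, Set.forall_mem_range.2 (abs_le_one hf)⟩ x

theorem iSup_abs_le_one (hf : f ∈ BLipb d) : ⨆ x, |f x| ≤ 1 :=
  Real.iSup_le (abs_le_one hf) zero_le_one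

theorem abs_sub_le_two_mul_iSup_abs (hf : f ∈ BLipb d) (x y : X) :
    |f x - f y| ≤ 2 * ⨆ z, |f z| := by
  linarith [abs_sub (f x) (f y), abs_le_iSup_abs hf x, abs_le_iSup_abs hf y]

end BLipb

theorem div_sqrt_norm_mem_blipb_general {X : Type*} (d : X → X → ℝ)
    (f : X → ℝ) (hf : f ∈ BLipb d) :
    (∀ x : X, |f x / Real.sqrt (⨆ x, |f x|)| ≤ 1) ∧
      ∀ x y : X, |f x / Real.sqrt (⨆ x, |f x|) - f y / Real.sqrt (⨆ x, |f x|)| ≤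
        2 * Real.sqrt (d x y) := by
  have hsqrt : |√(⨆ x, |f x|)| = √(⨆ x, |f x|) := abs_of_nonneg (Real.sqrt_nonneg _)
  constructor
  · intro x
    rw [abs_div, hsqrt]
    exact div_le_one_of_le₀ ((BLipb.abs_le_iSup_abs hf x).trans
      (Real.le_sqrt_self_iff.2 (BLipb.iSup_abs_le_one hf))) (Real.sqrt_nonneg _)
  · intro x y
    rw [div_sub_div_same, abs_div, hsqrt]
    exact div_le_of_le_mul₀ (Real.sqrt_nonneg _) (by positivity) <|
      Real.le_two_mul_sqrt_mul_sqrt (abs_nonneg _) (hf.2 x y)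
        (BLipb.abs_sub_le_two_mul_iSup_abs hf x y)

/-- If f ∈ BLip_b(Δ) has positive sup norm, then f/√‖f‖ ∈ BLip_b(2√Δ). -/
theorem div_sqrt_norm_mem_blipb {X : Type*} (d : X → X → ℝ) (hd : IsPseudometric d)
    (f : X → ℝ) (hf : f ∈ BLipb d) (hpos : 0 < ⨆ x, |f x|) :
    (∀ x : X, |f x / Real.sqrt (⨆ x, |f x|)| ≤ 1) ∧
      ∀ x y : X, |f x / Real.sqrt (⨆ x, |f x|) - f y / Real.sqrt (⨆ x, |f x|)| ≤
        2 * Real.sqrt (d x y) :=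
  div_sqrt_norm_mem_blipb_general d f hf
end

section
/- Let d be a pseudometric on a set X and let x, y ∈ X. Then sup { f(x) − f(y) : f ∈ BLip_b(d) } = min(2, d(x,y)). -/
namespace IsPseudometric

variable {X : Type*} {d : X → X → ℝ}

theorem abs_sub_le_s4 (hd : IsPseudometric d) (z w y : X) : |d z y - d w y| ≤ d z w := by
  obtain ⟨-, hsymm, -, htri⟩ := hd
  rw [abs_sub_le_iff]
  constructor
  · linarith [htri z w y]
  · linarith [htri w z y, hsymm w z]

theorem min_two_sub_one_mem_blipb (hd : IsPseudometric d) (y : X) :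
    (fun z => min 2 (d z y) - 1) ∈ BLipb d := by
  refine ⟨fun z => ?_, fun z w => ?_⟩
  · have := hd.2.2.1 z y
    constructor <;> linarith [min_le_left 2 (d z y), le_min zero_le_two this]
  · calc |(min 2 (d z y) - 1) - (min 2 (d w y) - 1)|
        = |min 2 (d z y) - min 2 (d w y)| := by ring_nf
      _ ≤ max |2 - 2| |d z y - d w y| := abs_min_sub_min_le_max _ _ _ _
      _ = |d z y - d w y| := by simp
      _ ≤ d z w := hd.abs_sub_le_s4 z w y

end IsPseudometric

theorem sub_le_min_two_of_mem_blipb {X : Type*} {d : X → X → ℝ} {f : X → ℝ} (hf : f ∈ BLipb d)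
    (x y : X) : f x - f y ≤ min 2 (d x y) :=
  le_min (by linarith [(hf.1 x).2, (hf.1 y).1]) ((le_abs_self _).trans (hf.2 x y))

/-- sup { f(x) − f(y) : f ∈ BLip_b(d) } = min(2, d(x,y)). -/
theorem sSup_blipb_eval_sub (X : Type*) (d : X → X → ℝ) (hd : IsPseudometric d)
    (x y : X) :
    sSup ((fun f : X → ℝ => f x - f y) '' BLipb d) = min 2 (d x y) := by
  refine IsGreatest.csSup_eq ⟨⟨_, hd.min_two_sub_one_mem_blipb y, ?_⟩, ?_⟩
  · simp only [hd.1 y, min_eq_right zero_le_two]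
    ring
  · rintro _ ⟨f, hf, rfl⟩
    exact sub_le_min_two_of_mem_blipb hf x y
end

section
/- Let G be a topological group, Δ a continuous bi-invariant pseudometric on G, n a molecular measure on G, and f ∈ BLip_b(Δ). Define n•f : G → ℝ by n•f(x) := ∑_y n(y)·f(x·y) (finite sum over the support of n). Then |n•f(x)| ≤ ‖n‖_{2√Δ} for every x ∈ G, and |n•f(x) − n•f(z)| ≤ √2 · ‖n‖_{2√Δ} · √(Δ(x,z)) for all x, z ∈ G. -/
def molApply {G : Type*} (m : G →₀ ℝ) (f : G → ℝ) : ℝ := m.sum fun x c => c * f x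

noncomputable def uebNorm {G : Type*} (d : G → G → ℝ) (m : G →₀ ℝ) : ℝ :=
  sSup ((fun f => molApply m f) '' BLipb d)

open Real

lemma abs_le_sqrt_mul_sqrt {u a b : ℝ} (ha : |u| ≤ a) (hb : |u| ≤ b) : |u| ≤ √a * √b :=
  calc |u| = √|u| * √|u| := (mul_self_sqrt (abs_nonneg u)).symm
    _ ≤ √a * √b := by gcongr

lemma sqrt_two_le_two : √2 ≤ 2 :=
  (sqrt_le_left zero_le_two).2 (by norm_num)

section BLipb

variable {X : Type*} {d : X → X → ℝ} {f : X → ℝ}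

lemma abs_le_one_of_mem_BLipb (hf : f ∈ BLipb d) (x : X) : |f x| ≤ 1 :=
  abs_le.2 (hf.1 x)

lemma abs_sub_le_two_of_mem_BLipb (hf : f ∈ BLipb d) (x y : X) : |f x - f y| ≤ 2 := by
  linarith [abs_sub (f x) (f y), abs_le_one_of_mem_BLipb hf x, abs_le_one_of_mem_BLipb hf y]

lemma neg_mem_BLipb (hf : f ∈ BLipb d) : -f ∈ BLipb d := by
  refine ⟨fun x => ?_, fun x y => ?_⟩
  · simpa [neg_le, and_comm] using hf.1 x
  · simpa [neg_add_eq_sub, abs_sub_comm] using hf.2 x y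

lemma mem_BLipb_two_mul_sqrt (hf : f ∈ BLipb d) : f ∈ BLipb fun x y => 2 * √(d x y) := by
  refine ⟨hf.1, fun x y => ?_⟩
  calc |f x - f y| ≤ √2 * √(d x y) :=
        abs_le_sqrt_mul_sqrt (abs_sub_le_two_of_mem_BLipb hf x y) (hf.2 x y)
    _ ≤ 2 * √(d x y) := by gcongr; exact sqrt_two_le_two

end BLipb

section Molecular

variable {G : Type*} (n : G →₀ ℝ) {d : G → G → ℝ}

lemma molApply_neg (g : G → ℝ) : molApply n (-g) = -molApply n g := by
  simp [molApply, Finsupp.sum]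

lemma molApply_sub (g h : G → ℝ) : molApply n (g - h) = molApply n g - molApply n h := by
  simp [molApply, Finsupp.sum, mul_sub]

lemma molApply_smul (c : ℝ) (g : G → ℝ) : molApply n (c • g) = c * molApply n g := by
  simp [molApply, Finsupp.sum, Finset.mul_sum, mul_left_comm]

lemma bddAbove_molApply_image_BLipb (d : G → G → ℝ) :
    BddAbove ((fun f => molApply n f) '' BLipb d) := by
  refine ⟨∑ x ∈ n.support, |n x|, ?_⟩
  rintro _ ⟨f, hf, rfl⟩
  calc molApply n f = ∑ x ∈ n.support, n x * f x := rfl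
    _ ≤ ∑ x ∈ n.support, |n x| := Finset.sum_le_sum fun x _ => by
        calc n x * f x ≤ |n x * f x| := le_abs_self _
          _ = |n x| * |f x| := abs_mul _ _
          _ ≤ |n x| * 1 := by gcongr; exact abs_le_one_of_mem_BLipb hf x
          _ = |n x| := mul_one _

lemma molApply_le_uebNorm {f : G → ℝ} (hf : f ∈ BLipb d) : molApply n f ≤ uebNorm d n :=
  le_csSup (bddAbove_molApply_image_BLipb n d) ⟨f, hf, rfl⟩

lemma abs_molApply_le_uebNorm {f : G → ℝ} (hf : f ∈ BLipb d) :
    |molApply n f| ≤ uebNorm d n := by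
  refine abs_le'.2 ⟨molApply_le_uebNorm n hf, ?_⟩
  rw [← molApply_neg]
  exact molApply_le_uebNorm n (neg_mem_BLipb hf)

lemma abs_molApply_le_mul_uebNorm {g : G → ℝ} {c : ℝ} (hc : 0 ≤ c) (hg : ∀ x, |g x| ≤ c)
    (hg' : ∀ x y, |g x - g y| ≤ c * d x y) : |molApply n g| ≤ c * uebNorm d n := by
  rcases hc.eq_or_lt with rfl | hc
  · have hg0 : g = (0 : ℝ) • g := funext fun x => by simpa using hg x
    rw [hg0, molApply_smul, zero_mul, zero_mul, abs_zero]
  · have hscaled : c⁻¹ • g ∈ BLipb d := by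
      refine ⟨fun x => abs_le.1 ?_, fun x y => ?_⟩
      · simpa [abs_mul, abs_of_pos hc, inv_mul_le_one₀ hc] using hg x
      · simpa [← mul_sub, abs_mul, abs_of_pos hc, inv_mul_le_iff₀ hc] using hg' x y
    have hg_eq : g = c • c⁻¹ • g := by rw [smul_smul, mul_inv_cancel₀ hc.ne', one_smul]
    rw [hg_eq, molApply_smul, abs_mul, abs_of_pos hc]
    exact mul_le_mul_of_nonneg_left (abs_molApply_le_uebNorm n hscaled) hc.le

end Molecular

section Translate

variable {G : Type*} [Group G] {Δ : G → G → ℝ} {f : G → ℝ}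

lemma comp_mul_left_mem_BLipb (hli : LeftInvariant Δ) (hf : f ∈ BLipb Δ) (x : G) :
    (fun y => f (x * y)) ∈ BLipb Δ :=
  ⟨fun y => hf.1 (x * y), fun a b => hli a b x ▸ hf.2 (x * a) (x * b)⟩

lemma abs_translate_sub_translate_le (hri : RightInvariant Δ) (hf : f ∈ BLipb Δ) (x z y : G) :
    |f (x * y) - f (z * y)| ≤ √2 * √(Δ x z) :=
  abs_le_sqrt_mul_sqrt (abs_sub_le_two_of_mem_BLipb hf _ _) (hri x z y ▸ hf.2 (x * y) (z * y))

lemma abs_translate_sub_translate_sub_le (hli : LeftInvariant Δ) (hri : RightInvariant Δ)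
    (hf : f ∈ BLipb Δ) (x z a b : G) :
    |(f (x * a) - f (z * a)) - (f (x * b) - f (z * b))| ≤ √2 * √(Δ x z) * (2 * √(Δ a b)) := by
  have hxz : |(f (x * a) - f (z * a)) - (f (x * b) - f (z * b))| ≤ 2 * Δ x z := by
    have ha := hri x z a ▸ hf.2 (x * a) (z * a)
    have hb := hri x z b ▸ hf.2 (x * b) (z * b)
    linarith [abs_sub (f (x * a) - f (z * a)) (f (x * b) - f (z * b))]
  have hab : |(f (x * a) - f (z * a)) - (f (x * b) - f (z * b))| ≤ 2 * Δ a b := by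
    have hx := hli a b x ▸ hf.2 (x * a) (x * b)
    have hz := hli a b z ▸ hf.2 (z * a) (z * b)
    rw [sub_sub_sub_comm]
    linarith [abs_sub (f (x * a) - f (x * b)) (f (z * a) - f (z * b))]
  calc _ ≤ √(2 * Δ x z) * √(2 * Δ a b) := abs_le_sqrt_mul_sqrt hxz hab
    _ = √2 * √(Δ x z) * (√2 * √(Δ a b)) := by rw [sqrt_mul zero_le_two, sqrt_mul zero_le_two]
    _ ≤ √2 * √(Δ x z) * (2 * √(Δ a b)) := by gcongr; exact sqrt_two_le_two

end Translate

theorem molecular_action_bounds_general (G : Type*) [Group G]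
    (Δ : G → G → ℝ)
    (hli : LeftInvariant Δ) (hri : RightInvariant Δ)
    (n : G →₀ ℝ) (f : G → ℝ) (hf : f ∈ BLipb Δ) :
    (∀ x : G, |molApply n fun y => f (x * y)| ≤
        uebNorm (fun a b => 2 * Real.sqrt (Δ a b)) n) ∧
      ∀ x z : G, |(molApply n fun y => f (x * y)) - molApply n fun y => f (z * y)| ≤
        Real.sqrt 2 * uebNorm (fun a b => 2 * Real.sqrt (Δ a b)) n * Real.sqrt (Δ x z) := by
  refine ⟨fun x => abs_molApply_le_uebNorm n
    (mem_BLipb_two_mul_sqrt (comp_mul_left_mem_BLipb hli hf x)), fun x z => ?_⟩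
  rw [← molApply_sub, mul_right_comm]
  exact abs_molApply_le_mul_uebNorm n (by positivity) (abs_translate_sub_translate_le hri hf x z)
    (abs_translate_sub_translate_sub_le hli hri hf x z)

/-- bounds on n•f for a molecular measure n and f ∈ BLip_b(Δ),
Δ a continuous bi-invariant pseudometric. -/
theorem molecular_action_bounds (G : Type*) [Group G] [TopologicalSpace G]
    [IsTopologicalGroup G] [T2Space G]
    (Δ : G → G → ℝ) (hpm : IsPseudometric Δ) (hcont : ContPseudometric Δ)
    (hli : LeftInvariant Δ) (hri : RightInvariant Δ)
    (n : G →₀ ℝ) (f : G → ℝ) (hf : f ∈ BLipb Δ) :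
    (∀ x : G, |molApply n fun y => f (x * y)| ≤
        uebNorm (fun a b => 2 * Real.sqrt (Δ a b)) n) ∧
      ∀ x z : G, |(molApply n fun y => f (x * y)) - molApply n fun y => f (z * y)| ≤
        Real.sqrt 2 * uebNorm (fun a b => 2 * Real.sqrt (Δ a b)) n * Real.sqrt (Δ x z) :=
  molecular_action_bounds_general G Δ hli hri n f hf
end

section
/- In the additive group ℝ with the pseudometric d(x,y) = |x − y|, let √d denote the pseudometric (x,y) ↦ √|x − y|, and for each integer j ≥ 1 let m_j := j·(δ_{1/j²} − δ_0), a molecular measure on ℝ. Then ‖m_j‖_{√d} = 1 for every j ≥ 1. -/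
lemma Real.sqrt_add_le_add_sqrt {a b : ℝ} (ha : 0 ≤ a) (hb : 0 ≤ b) :
    √(a + b) ≤ √a + √b :=
  Real.sqrt_le_iff.mpr ⟨by positivity, by
    nlinarith [Real.sq_sqrt ha, Real.sq_sqrt hb, Real.sqrt_nonneg a, Real.sqrt_nonneg b]⟩

lemma isPseudometric_dist {X : Type*} [PseudoMetricSpace X] : IsPseudometric (dist : X → X → ℝ) :=
  ⟨dist_self, dist_comm, fun _ _ => dist_nonneg, dist_triangle⟩

namespace IsPseudometric

variable {X : Type*} {d : X → X → ℝ}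

lemma sqrt (hd : IsPseudometric d) : IsPseudometric fun x y => √(d x y) := by
  obtain ⟨hself, hcomm, hnonneg, htri⟩ := hd
  refine ⟨fun x => by simp [hself], fun x y => congrArg Real.sqrt (hcomm x y),
    fun _ _ => Real.sqrt_nonneg _, fun x y z => ?_⟩
  calc √(d x z) ≤ √(d x y + d y z) := Real.sqrt_le_sqrt (htri x y z)
    _ ≤ √(d x y) + √(d y z) := Real.sqrt_add_le_add_sqrt (hnonneg x y) (hnonneg y z)

lemma min_one_mem_bLipb (hd : IsPseudometric d) (b : X) : (fun x => min (d x b) 1) ∈ BLipb d := by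
  obtain ⟨-, hcomm, hnonneg, htri⟩ := hd
  refine ⟨fun x => ⟨by linarith [le_min (hnonneg x b) zero_le_one], min_le_right _ _⟩,
    fun x y => ?_⟩
  have hdist : |d x b - d y b| ≤ d x y := by
    rw [abs_sub_le_iff]
    constructor <;> linarith [htri x y b, htri y x b, hcomm x y]
  calc |min (d x b) 1 - min (d y b) 1| ≤ max |d x b - d y b| |1 - 1| :=
        abs_min_sub_min_le_max _ _ _ _
    _ ≤ d x y := by simpa using hdist

end IsPseudometric

lemma molApply_smul_single_sub_single {G : Type*} (c : ℝ) (a b : G) (f : G → ℝ) :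
    molApply (c • (Finsupp.single a 1 - Finsupp.single b 1)) f = c * (f a - f b) := by
  rw [molApply, smul_sub, Finsupp.smul_single, Finsupp.smul_single,
    Finsupp.sum_sub_index (fun _ _ _ => sub_mul _ _ _),
    Finsupp.sum_single_index (zero_mul _), Finsupp.sum_single_index (zero_mul _)]
  simp only [smul_eq_mul, mul_one, mul_sub]

lemma uebNorm_smul_single_sub_single {G : Type*} {d : G → G → ℝ} (hd : IsPseudometric d)
    {a b : G} (hab : d a b ≤ 1) {c : ℝ} (hc : 0 ≤ c) :
    uebNorm d (c • (Finsupp.single a 1 - Finsupp.single b 1)) = c * d a b := by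
  refine IsGreatest.csSup_eq ⟨⟨_, hd.min_one_mem_bLipb b, ?_⟩, ?_⟩
  · simp [molApply_smul_single_sub_single, hd.1 b, hab]
  · rintro _ ⟨f, hf, rfl⟩
    show molApply _ f ≤ _
    rw [molApply_smul_single_sub_single]
    exact mul_le_mul_of_nonneg_left ((le_abs_self _).trans (hf.2 a b)) hc

/-- for m_j = j(δ_{1/j²} − δ_0) on ℝ, one has ‖m_j‖_{√d} = 1 where
√d(x,y) = √|x − y|. -/
theorem uebNorm_sqrt_example (j : ℕ) (hj : 1 ≤ j) :
    uebNorm (fun x y : ℝ => Real.sqrt |x - y|)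
        ((j : ℝ) • (Finsupp.single (1 / (j : ℝ) ^ 2) (1 : ℝ) - Finsupp.single 0 1)) = 1 := by
  have hjR : (1 : ℝ) ≤ j := by exact_mod_cast hj
  have hd : IsPseudometric fun x y : ℝ => √|x - y| := isPseudometric_dist.sqrt
  have hsqrt : √|1 / (j : ℝ) ^ 2 - 0| = 1 / j := by
    rw [sub_zero, ← one_div_pow, abs_of_nonneg (by positivity), Real.sqrt_sq (by positivity)]
  rw [uebNorm_smul_single_sub_single hd (by rw [hsqrt]; exact div_le_one_of_le₀ hjR (by linarith))
    (by positivity), hsqrt]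
  field_simp
end

section
/- Let G be a Hausdorff topological group with identity e whose underlying topological space is locally compact or metrizable. Suppose that every bounded continuous function f : G → ℝ that is uniformly continuous for the right uniformity (for every ε > 0 there is a neighbourhood V of e such that x·y⁻¹ ∈ V implies |f(x) − f(y)| ≤ ε) is also uniformly continuous for the left uniformity (for every ε > 0 there is a neighbourhood V of e such that x⁻¹·y ∈ V implies |f(x) − f(y)| ≤ ε). Then G is a SIN group: for every neighbourhood U of e there exists a neighbourhood V of e such that x·v·x⁻¹ ∈ U for all x ∈ G and all v ∈ V. -/
/-!
If `G` is not SIN, some `U ∈ 𝓝 1` admits, inside every identity neighbourhood, a `v` with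
`x * v * x⁻¹ ∉ U` for some `x`. Choosing such pairs `(x n, v n)` recursively, together with a chain
of symmetric identity neighbourhoods `V n` with `V (n + 1) * V (n + 1) ⊆ V n` that is moreover
compatible with conjugation by the elements chosen before, keeps the points `x m` uniformly away
from the points `x j * v j` for the right-invariant uniformity generated by the `V n`. That
uniformity is countably generated, hence pseudometrizable, so a Urysohn function `f` with `f = 1`
on the `x m` and `f = 0` on the `x j * v j` is right uniformly continuous. It is not left uniformly
continuous since `(x k)⁻¹ * (x k * v k) = v k` is eventually in any given identity neighbourhood:
outright when `G` is metrizable (the `V n` can be taken inside a countable basis), and up to the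
kernel `⋂ n, V n`, on whose right cosets `f` is constant, when `G` is locally compact.
-/

open Filter Set Topology Metric Uniformity Pointwise

theorem exists_seq_of_forall_exists_succ {α : Type*} {P : α → Prop} {R : ℕ → α → α → Prop}
    {a : α} (ha : P a) (h : ∀ n a, P a → ∃ b, P b ∧ R n a b) :
    ∃ s : ℕ → α, s 0 = a ∧ (∀ n, P (s n)) ∧ ∀ n, R n (s n) (s (n + 1)) := by
  choose! next hnext using h
  let s : ℕ → α := fun n => Nat.rec a next n
  have hs : ∀ n, P (s n) := fun n => Nat.rec ha (fun n ih => (hnext n _ ih).1) n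
  exact ⟨s, rfl, hs, fun n => (hnext n _ (hs n)).2⟩

theorem exists_separating_of_entourage_chain {X : Type*} {E : ℕ → Set (X × X)}
    (hrefl : ∀ n x, (x, x) ∈ E n) (hsymm : ∀ n x y, (x, y) ∈ E n → (y, x) ∈ E n)
    (htrans : ∀ n x y z, (x, y) ∈ E (n + 1) → (y, z) ∈ E (n + 1) → (x, z) ∈ E n)
    {A B : Set X} (hAB : ∀ a ∈ A, ∀ b ∈ B, (a, b) ∉ E 0) :
    ∃ f : X → ℝ, (∀ ε > 0, ∃ n, ∀ x y, (x, y) ∈ E n → |f x - f y| ≤ ε) ∧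
      (∀ x, |f x| ≤ 1) ∧ EqOn f 1 A ∧ EqOn f 0 B := by
  rcases B.eq_empty_or_nonempty with rfl | hB
  · exact ⟨1, fun ε hε => ⟨0, by simp [hε.le]⟩, by simp, eqOn_refl _ _, by simp⟩
  have hanti : Antitone E :=
    antitone_nat_of_succ_le fun n p hp => htrans n _ _ _ hp (hrefl _ _)
  obtain ⟨I, hI⟩ := @UniformSpace.metrizable_uniformity X (.ofCore
    { uniformity := ⨅ n, 𝓟 (E n)
      refl := le_iInf fun n => principal_mono.2 <| SetRel.id_subset_iff.2 ⟨hrefl n⟩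
      symm := tendsto_iInf.2 fun n => tendsto_iInf' n <|
        tendsto_principal_principal.2 fun p hp => hsymm n _ _ hp
      comp := le_iInf fun n => le_principal_iff.2 <|
        mem_of_superset (mem_lift' (mem_iInf_of_mem (n + 1) (mem_principal_self _)))
          fun _ ⟨_, h₁, h₂⟩ => htrans n _ _ _ h₁ h₂ }) (isCountablyGenerated_seq E)
  let _ := I
  have hE : (𝓤 X).HasBasis (fun _ => True) E := by
    rw [hI]; exact hasBasis_iInf_principal hanti.directed_ge
  obtain ⟨r, hr, hrE⟩ := Metric.mem_uniformity_dist.1 (hE.mem_of_mem trivial)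
  have hrB : ∀ a ∈ A, r ≤ infDist a B := fun a ha =>
    (le_infDist hB).2 fun b hb => not_lt.1 fun h => hAB a ha b hb (hrE h)
  refine ⟨fun x => min 1 (infDist x B / r), fun ε hε => ?_, fun x => ?_, fun a ha => ?_,
    fun b hb => ?_⟩
  · obtain ⟨n, -, hn⟩ := hE.mem_iff.1 (Metric.dist_mem_uniformity (mul_pos hε hr))
    refine ⟨n, fun x y hxy => ?_⟩
    calc |min 1 (infDist x B / r) - min 1 (infDist y B / r)|
        ≤ |infDist x B / r - infDist y B / r| := by
          simpa using abs_min_sub_min_le_max 1 (infDist x B / r) 1 (infDist y B / r)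
      _ = dist (infDist x B) (infDist y B) / r := by rw [← sub_div, abs_div, abs_of_pos hr]; rfl
      _ ≤ dist x y / r := by gcongr; simpa using (lipschitz_infDist_pt B).dist_le_mul x y
      _ ≤ ε := (div_le_iff₀ hr).2 (hn hxy).le
  · have : 0 ≤ infDist x B / r := div_nonneg infDist_nonneg hr.le
    exact abs_le.2 ⟨by linarith [le_min zero_le_one this], min_le_left _ _⟩
  · exact min_eq_left ((one_le_div hr).2 (hrB a ha))
  · simp [infDist_zero_of_mem hb]

section

variable {G : Type*} [Group G]

theorem conj_mem_of_mul_inv_mem {U V : Set G} (hVU : V * V * V ⊆ U) (hV : ∀ g ∈ V, g⁻¹ ∈ V)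
    {w z g : G} (hwz : w * z⁻¹ ∈ V) (hz : z * g * z⁻¹ ∈ V) : w * g * w⁻¹ ∈ U := by
  rw [show w * g * w⁻¹ = w * z⁻¹ * (z * g * z⁻¹) * (w * z⁻¹)⁻¹ by group]
  exact hVU (mul_mem_mul (mul_mem_mul hwz hz) (hV _ hwz))

variable [TopologicalSpace G]

def RightUniformContinuous (f : G → ℝ) : Prop :=
  ∀ ε : ℝ, 0 < ε → ∃ V ∈ 𝓝 (1 : G), ∀ x y : G, x * y⁻¹ ∈ V → |f x - f y| ≤ ε

def LeftUniformContinuous (f : G → ℝ) : Prop :=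
  ∀ ε : ℝ, 0 < ε → ∃ V ∈ 𝓝 (1 : G), ∀ x y : G, x⁻¹ * y ∈ V → |f x - f y| ≤ ε

theorem RightUniformContinuous.continuous [IsTopologicalGroup G] {f : G → ℝ}
    (hf : RightUniformContinuous f) : Continuous f := by
  refine continuous_iff_continuousAt.2 fun g => Metric.tendsto_nhds.2 fun ε hε => ?_
  obtain ⟨V, hV, hfV⟩ := hf (ε / 2) (half_pos hε)
  filter_upwards [(continuous_mul_const g⁻¹).tendsto' g 1 (mul_inv_cancel g) hV] with y hy
  exact (hfV y g hy).trans_lt (half_lt_self hε)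

structure IsNhdsChain (V : ℕ → Set G) : Prop where
  mem_nhds : ∀ n, V n ∈ 𝓝 1
  inv_mem : ∀ n, ∀ g ∈ V n, g⁻¹ ∈ V n
  mul_subset : ∀ n, V (n + 1) * V (n + 1) ⊆ V n

namespace IsNhdsChain

variable {V : ℕ → Set G}

theorem one_mem (hV : IsNhdsChain V) (n : ℕ) : (1 : G) ∈ V n :=
  mem_of_mem_nhds (hV.mem_nhds n)

theorem antitone (hV : IsNhdsChain V) : Antitone V :=
  antitone_nat_of_succ_le fun n g hg =>
    hV.mul_subset n (by simpa using mul_mem_mul hg (hV.one_mem (n + 1)))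

variable [IsTopologicalGroup G]

theorem closure_subset (hV : IsNhdsChain V) (n : ℕ) : closure (V (n + 1)) ⊆ V n :=
  (closure_subset_mul_right_of_mem_nhds_one_of_inv _ (hV.mem_nhds _) (hV.inv_mem _)).trans
    (hV.mul_subset n)

theorem exists_subset_iInter_mul (hV : IsNhdsChain V) {K : Set G} (hK : IsCompact K)
    (hVK : V 1 ⊆ K) {W : Set G} (hW : W ∈ 𝓝 1) : ∃ k, V k ⊆ (⋂ n, V n) * W := by
  have hO : IsOpen ((⋂ n, V n) * interior W) := isOpen_interior.mul_left
  obtain ⟨i, hi⟩ := exists_subset_nhds_of_isCompact' (V := fun i => closure (V (i + 1)))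
    (Antitone.directed_ge fun i j hij => closure_mono (hV.antitone (by omega)))
    (fun i => hK.closure_of_subset ((hV.antitone (by omega)).trans hVK))
    (fun _ => isClosed_closure)
    (fun g hg => hO.mem_nhds <| subset_mul_left _ (mem_interior_iff_mem_nhds.2 hW) <|
      mem_iInter.2 fun n => hV.closure_subset n (mem_iInter.1 hg n))
  exact ⟨i + 1, subset_closure.trans (hi.trans (mul_subset_mul_left interior_subset))⟩

end IsNhdsChain

structure IsNonSINChain (U : Set G) (V : ℕ → Set G) (x v : ℕ → G) : Prop
    extends IsNhdsChain V where
  cube_subset : V 0 * V 0 * V 0 ⊆ U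
  mem : ∀ n, v n ∈ V n
  conj_notMem : ∀ n, x n * v n * (x n)⁻¹ ∉ U
  conj_mem : ∀ k n, k ≤ n → ∀ g ∈ V (n + 1),
    x k * g * (x k)⁻¹ ∈ V n ∧ x k * v k * g * (x k * v k)⁻¹ ∈ V n

theorem exists_symm_nhds_conj_subset [IsTopologicalGroup G] {V T : Set G} (hV : V ∈ 𝓝 1)
    (hT : T ∈ 𝓝 1) (F : Finset G) :
    ∃ W ∈ 𝓝 (1 : G), (∀ g ∈ W, g⁻¹ ∈ W) ∧ W ⊆ T ∧ W * W ⊆ V ∧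
      ∀ g ∈ F, ∀ h ∈ W, g * h * g⁻¹ ∈ V := by
  have hconj : V ∩ T ∩ ⋂ g ∈ F, (fun h => g * h * g⁻¹) ⁻¹' V ∈ 𝓝 1 :=
    inter_mem (inter_mem hV hT) <| (biInter_finset_mem F).2 fun g _ =>
      ((continuous_mul_const g⁻¹).comp (continuous_const_mul g)).tendsto' 1 1 (by simp) hV
  obtain ⟨W, hW, -, hWinv, hWW⟩ := exists_closed_nhds_one_inv_eq_mul_subset hconj
  have hWsub := (subset_mul_left W (mem_of_mem_nhds hW)).trans hWW
  exact ⟨W, hW, fun g hg => hWinv ▸ inv_mem_inv.2 hg, fun g hg => (hWsub hg).1.2,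
    hWW.trans fun g hg => hg.1.1, fun g hg h hh => mem_iInter₂.1 (hWsub hh).2 g hg⟩

theorem exists_isNonSINChain [IsTopologicalGroup G] {U : Set G} (hU : U ∈ 𝓝 1)
    (hbad : ∀ W ∈ 𝓝 (1 : G), ∃ x, ∃ v ∈ W, x * v * x⁻¹ ∉ U) {S : ℕ → Set G}
    (hS : ∀ n, S n ∈ 𝓝 1) :
    ∃ V x v, IsNonSINChain U V x v ∧ ∀ n, V (n + 1) ⊆ S n := by
  classical
  choose! xOf vOf hvOf hxOf using hbad
  -- The state is the current neighbourhood together with the conjugators chosen so far.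
  let Next : ℕ → Set G × Finset G → Set G × Finset G → Prop := fun n p q =>
    q.1 ⊆ S n ∧ q.1 * q.1 ⊆ p.1 ∧ q.2 = insert (xOf p.1) (insert (xOf p.1 * vOf p.1) p.2) ∧
      ∀ g ∈ q.2, ∀ h ∈ q.1, g * h * g⁻¹ ∈ p.1
  obtain ⟨U₁, hU₁, -, -, hU₁U⟩ := exists_closed_nhds_one_inv_eq_mul_subset hU
  obtain ⟨U₀, hU₀, -, hU₀inv, hU₀U₁⟩ := exists_closed_nhds_one_inv_eq_mul_subset hU₁
  obtain ⟨s, hs0, hs, hnext⟩ := exists_seq_of_forall_exists_succ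
    (P := fun p => p.1 ∈ 𝓝 1 ∧ ∀ g ∈ p.1, g⁻¹ ∈ p.1) (R := Next) (a := (U₀, ∅))
    ⟨hU₀, fun g hg => hU₀inv ▸ inv_mem_inv.2 hg⟩ fun n p hp => by
      obtain ⟨W, hW, hWinv, hWS, hWW, hWconj⟩ := exists_symm_nhds_conj_subset hp.1 (hS n)
        (insert (xOf p.1) (insert (xOf p.1 * vOf p.1) p.2))
      exact ⟨(W, _), ⟨hW, hWinv⟩, hWS, hWW, rfl, hWconj⟩
  have hF : Monotone fun n => (s n).2 := monotone_nat_of_le_succ fun n => by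
    rw [(hnext n).2.2.1]
    exact (Finset.subset_insert _ _).trans (Finset.subset_insert _ _)
  have hxF : ∀ k n, k ≤ n →
      xOf (s k).1 ∈ (s (n + 1)).2 ∧ xOf (s k).1 * vOf (s k).1 ∈ (s (n + 1)).2 := by
    intro k n hkn
    have := (hnext k).2.2.1
    refine ⟨hF (Nat.succ_le_succ hkn) ?_, hF (Nat.succ_le_succ hkn) ?_⟩ <;> simp [this]
  refine ⟨fun n => (s n).1, fun n => xOf (s n).1, fun n => vOf (s n).1,
    ⟨⟨fun n => (hs n).1, fun n => (hs n).2, fun n => (hnext n).2.1⟩, ?_,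
      fun n => hvOf _ (hs n).1, fun n => hxOf _ (hs n).1, fun k n hkn g hg => ?_⟩,
    fun n => (hnext n).1⟩
  · rw [hs0]
    exact (mul_subset_mul hU₀U₁ ((subset_mul_left U₀ (mem_of_mem_nhds hU₀)).trans hU₀U₁)).trans
      hU₁U
  · exact ⟨(hnext n).2.2.2 _ (hxF k n hkn).1 g hg, (hnext n).2.2.2 _ (hxF k n hkn).2 g hg⟩

namespace IsNonSINChain

variable {U : Set G} {V : ℕ → Set G} {x v : ℕ → G}

theorem mul_inv_notMem (hD : IsNonSINChain U V x v) (m j : ℕ) : x m * (x j * v j)⁻¹ ∉ V 0 := by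
  intro ha
  have hV := hD.toIsNhdsChain
  rcases lt_trichotomy m j with hmj | rfl | hjm
  · -- `x j * v j * (x j)⁻¹` is also the conjugate of `v j` by `x j * v j`.
    apply hD.conj_notMem j
    have ha' : x j * v j * (x m)⁻¹ ∈ V 0 := by simpa using hV.inv_mem 0 _ ha
    have hconj := hD.conj_mem m m le_rfl _ (hV.antitone hmj (hD.mem j))
    have := conj_mem_of_mul_inv_mem hD.cube_subset (hV.inv_mem 0) ha'
      (hV.antitone (Nat.zero_le m) hconj.1)
    rwa [show x j * v j * v j * (x j * v j)⁻¹ = x j * v j * (x j)⁻¹ by group] at this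
  · apply hD.conj_notMem m (hD.cube_subset _)
    rw [show x m * v m * (x m)⁻¹ = (x m * (x m * v m)⁻¹)⁻¹ * 1 * 1 by group]
    exact mul_mem_mul (mul_mem_mul (hV.inv_mem 0 _ ha) (hV.one_mem 0)) (hV.one_mem 0)
  · have hconj := hD.conj_mem j j le_rfl _ (hV.antitone hjm (hD.mem m))
    exact hD.conj_notMem m (conj_mem_of_mul_inv_mem hD.cube_subset (hV.inv_mem 0) ha
      (hV.antitone (Nat.zero_le j) hconj.2))

theorem conj_mem_iInter (hD : IsNonSINChain U V x v) (k : ℕ) {η : G} (hη : η ∈ ⋂ n, V n) :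
    x k * η * (x k)⁻¹ ∈ ⋂ n, V n := by
  rw [mem_iInter] at hη ⊢
  intro n
  rcases le_total k n with hkn | hnk
  · exact (hD.conj_mem k n hkn η (hη (n + 1))).1
  · exact hD.toIsNhdsChain.antitone hnk (hD.conj_mem k k le_rfl η (hη (k + 1))).1

theorem exists_not_leftUniformContinuous [IsTopologicalGroup G] (hD : IsNonSINChain U V x v)
    (hcover : ∀ W ∈ 𝓝 (1 : G), ∃ k, V k ⊆ (⋂ n, V n) * W) :
    ∃ f : G → ℝ, Continuous f ∧ (∃ C, ∀ g, |f g| ≤ C) ∧ RightUniformContinuous f ∧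
      ¬ LeftUniformContinuous f := by
  have hV := hD.toIsNhdsChain
  obtain ⟨f, hfV, hf1, hfx, hfy⟩ := exists_separating_of_entourage_chain
    (E := fun n => {p : G × G | p.1 * p.2⁻¹ ∈ V n}) (fun n a => by simpa using hV.one_mem n)
    (fun n a b h => by simpa using hV.inv_mem n _ h)
    (fun n a b c hab hbc => by simpa [mul_assoc] using hV.mul_subset n (mul_mem_mul hab hbc))
    (A := range x) (B := range fun j => x j * v j)
    (by rintro _ ⟨m, rfl⟩ _ ⟨j, rfl⟩; exact hD.mul_inv_notMem m j)
  have hruc : RightUniformContinuous f := fun ε hε =>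
    let ⟨n, hn⟩ := hfV ε hε; ⟨V n, hV.mem_nhds n, hn⟩
  have hker : ∀ η ∈ ⋂ n, V n, ∀ g, f (η * g) = f g := fun η hη g =>
    eq_of_forall_dist_le fun ε hε =>
      let ⟨n, hn⟩ := hfV ε hε; hn _ _ (by simpa using mem_iInter.1 hη n)
  refine ⟨f, hruc.continuous, ⟨1, hf1⟩, hruc, fun hluc => ?_⟩
  obtain ⟨W, hW, hfW⟩ := hluc (1 / 2) (by norm_num)
  obtain ⟨k, hk⟩ := hcover W hW
  obtain ⟨η, hη, w, hw, hηw⟩ := hk (hD.mem k)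
  have h1 : f (x k * η) = 1 := by
    rw [show x k * η = x k * η * (x k)⁻¹ * x k by group, hker _ (hD.conj_mem_iInter k hη)]
    exact hfx (mem_range_self k)
  have h0 : f (x k * v k) = 0 := hfy (mem_range_self (f := fun j => x j * v j) k)
  have := hfW (x k * η) (x k * v k)
    (by rwa [← hηw, show (x k * η)⁻¹ * (x k * (η * w)) = w by group])
  rw [h1, h0] at this
  norm_num at this

end IsNonSINChain

end

theorem sin_of_luc_subset_ruc_general (G : Type*) [Group G] [TopologicalSpace G]
    [IsTopologicalGroup G]
    (hspace : LocallyCompactSpace G ∨ TopologicalSpace.MetrizableSpace G)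
    (h : ∀ f : G → ℝ, Continuous f → (∃ C : ℝ, ∀ x : G, |f x| ≤ C) →
      (∀ ε : ℝ, 0 < ε → ∃ V ∈ nhds (1 : G), ∀ x y : G, x * y⁻¹ ∈ V → |f x - f y| ≤ ε) →
      (∀ ε : ℝ, 0 < ε → ∃ V ∈ nhds (1 : G), ∀ x y : G, x⁻¹ * y ∈ V → |f x - f y| ≤ ε)) :
    ∀ U ∈ nhds (1 : G), ∃ V ∈ nhds (1 : G), ∀ x : G, ∀ v ∈ V, x * v * x⁻¹ ∈ U := by
  intro U hU
  by_contra! hbad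
  obtain ⟨S, hS, hcover⟩ : ∃ S : ℕ → Set G, (∀ n, S n ∈ 𝓝 1) ∧ ∀ V, IsNhdsChain V →
      (∀ n, V (n + 1) ⊆ S n) → ∀ W ∈ 𝓝 (1 : G), ∃ k, V k ⊆ (⋂ n, V n) * W := by
    rcases hspace with _ | _
    · obtain ⟨K, hK, hK1⟩ := exists_compact_mem_nhds (1 : G)
      exact ⟨fun _ => K, fun _ => hK1, fun V hV hVK W hW =>
        hV.exists_subset_iInter_mul hK (hVK 0) hW⟩
    · obtain ⟨B, hB⟩ := (𝓝 (1 : G)).exists_antitone_basis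
      refine ⟨B, hB.mem, fun V hV hVB W hW => ?_⟩
      obtain ⟨i, hi⟩ := hB.mem_iff.1 hW
      exact ⟨i + 1, (hVB i).trans (hi.trans (subset_mul_right W (mem_iInter.2 hV.one_mem)))⟩
  obtain ⟨V, x, v, hD, hVS⟩ := exists_isNonSINChain hU hbad hS
  obtain ⟨f, hfc, hfb, hruc, hluc⟩ :=
    hD.exists_not_leftUniformContinuous (hcover V hD.toIsNhdsChain hVS)
  exact hluc (h f hfc hfb hruc)

/-- a Hausdorff topological group that is locally compact or metrizable,
and on which every bounded continuous right uniformly continuous real function is left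
uniformly continuous, is a SIN group. -/
theorem sin_of_luc_subset_ruc (G : Type*) [Group G] [TopologicalSpace G]
    [IsTopologicalGroup G] [T2Space G]
    (hspace : LocallyCompactSpace G ∨ TopologicalSpace.MetrizableSpace G)
    (h : ∀ f : G → ℝ, Continuous f → (∃ C : ℝ, ∀ x : G, |f x| ≤ C) →
      (∀ ε : ℝ, 0 < ε → ∃ V ∈ nhds (1 : G), ∀ x y : G, x * y⁻¹ ∈ V → |f x - f y| ≤ ε) →
      (∀ ε : ℝ, 0 < ε → ∃ V ∈ nhds (1 : G), ∀ x y : G, x⁻¹ * y ∈ V → |f x - f y| ≤ ε)) :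
    ∀ U ∈ nhds (1 : G), ∃ V ∈ nhds (1 : G), ∀ x : G, ∀ v ∈ V, x * v * x⁻¹ ∈ U :=
  sin_of_luc_subset_ruc_general G hspace h
end
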